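/- Crossing Lemma: Let G be a 3-connected finite simple graph, 𝒯 a G-tangle of order 4, and (Y₁,S₁,Z₁), (Y₂,S₂,Z₂) ∈ 𝒯_min distinct. Then either (Y₁,S₁,Z₁) and (Y₂,S₂,Z₂) are orthogonal, or Y₁ ∩ Y₂ = ∅, S₁ ∩ S₂ = ∅, and there are vertices s₁, s₂ with s₁s₂ an edge of G, S₁ ∩ Y₂ = {s₁} and S₂ ∩ Y₁ = {s₂}. -/

import Mathlib

variable {V : Type*} {W : Type*}

/-- A separation (Y,S,Z) of a graph: pairwise disjoint sets covering the vertex set,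
with no edge between Y and Z. -/
def IsSeparation (G : SimpleGraph V) (Y S Z : Set V) : Prop :=
  Disjoint Y S ∧ Disjoint Y Z ∧ Disjoint S Z ∧ Y ∪ S ∪ Z = Set.univ ∧
    ∀ y ∈ Y, ∀ z ∈ Z, ¬ G.Adj y z

/-- `G` is `k`-connected: more than `k` vertices and no proper separation of order `< k`. -/
def KConnected (k : ℕ) (G : SimpleGraph V) : Prop :=
  k < Nat.card V ∧
    ∀ Y S Z : Set V, IsSeparation G Y S Z → Y.Nonempty → Z.Nonempty → k ≤ S.ncard

/-- `G` is quasi-4-connected. -/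
def Quasi4Connected (G : SimpleGraph V) : Prop :=
  KConnected 3 G ∧
    ∀ Y S Z : Set V, IsSeparation G Y S Z → S.ncard = 3 → Y.ncard ≤ 1 ∨ Z.ncard ≤ 1

/-- `T` is a `G`-tangle of order `k`. -/
def IsTangle (G : SimpleGraph V) (k : ℕ) (T : Set (Set V × Set V × Set V)) : Prop :=
  (∀ p ∈ T, IsSeparation G p.1 p.2.1 p.2.2 ∧ p.2.1.ncard < k) ∧
  (∀ Y S Z : Set V, IsSeparation G Y S Z → S.ncard < k →
    (Y, S, Z) ∈ T ∨ (Z, S, Y) ∈ T) ∧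
  (∀ p₁ ∈ T, ∀ p₂ ∈ T, ∀ p₃ ∈ T,
    (p₁.2.2 ∩ p₂.2.2 ∩ p₃.2.2 : Set V).Nonempty ∨
      ∃ u v : V, G.Adj u v ∧ (u ∈ p₁.2.2 ∨ v ∈ p₁.2.2) ∧
        (u ∈ p₂.2.2 ∨ v ∈ p₂.2.2) ∧ (u ∈ p₃.2.2 ∨ v ∈ p₃.2.2)) ∧
  (∀ p ∈ T, (p.2.2 : Set V).Nonempty)

/-- The order `⪯` on separations: (Y,S,Z) ⪯ (Y',S',Z') iff S ∪ Z ⊊ S' ∪ Z', or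
S ∪ Z = S' ∪ Z' and S ⊆ S'. -/
def SepLE (p q : Set V × Set V × Set V) : Prop :=
  p.2.1 ∪ p.2.2 ⊂ q.2.1 ∪ q.2.2 ∨
    (p.2.1 ∪ p.2.2 = q.2.1 ∪ q.2.2 ∧ p.2.1 ⊆ q.2.1)

/-- `p` is a `⪯`-minimal element of `T`. -/
def IsMinimalIn (T : Set (Set V × Set V × Set V)) (p : Set V × Set V × Set V) : Prop :=
  p ∈ T ∧ ∀ q ∈ T, SepLE q p → q = p

/-- Two separations are orthogonal. (They cross if they are not orthogonal.) -/
def SepOrthogonal (p q : Set V × Set V × Set V) : Prop :=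
  (p.1 ∪ p.2.1) ∩ (q.1 ∪ q.2.1) ⊆ p.2.1 ∩ q.2.1

/-- A separation (Y,S,Z) is degenerate: |Y| = 1 and S is an independent set. -/
def Degenerate (G : SimpleGraph V) (Y S Z : Set V) : Prop :=
  Y.ncard = 1 ∧ ∀ u ∈ S, ∀ v ∈ S, ¬ G.Adj u v

/-- The neighbourhood N(X): vertices outside X adjacent to a vertex of X. -/
def Nbhd (G : SimpleGraph V) (X : Set V) : Set V :=
  {v | v ∉ X ∧ ∃ u ∈ X, G.Adj u v}

/-- `C` is (the vertex set of) a connected component of `G − X`. -/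
def IsCompOutside (G : SimpleGraph V) (X C : Set V) : Prop :=
  C ⊆ Xᶜ ∧ (G.induce C).Connected ∧ ∀ u ∈ C, ∀ v : V, v ∉ X → G.Adj u v → v ∈ C

/-- The torso `G⟦X⟧` of `X` in `G`. -/
def torso (G : SimpleGraph V) (X : Set V) : SimpleGraph X where
  Adj u v := u ≠ v ∧ (G.Adj (u : V) (v : V) ∨
    ∃ C : Set V, IsCompOutside G X C ∧ (u : V) ∈ Nbhd G C ∧ (v : V) ∈ Nbhd G C)
  symm := by
    constructor
    rintro u v ⟨hne, h | ⟨C, hC, hu, hv⟩⟩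
    · exact ⟨hne.symm, Or.inl h.symm⟩
    · exact ⟨hne.symm, Or.inr ⟨C, hC, hv, hu⟩⟩
  loopless := by
    constructor
    intro u h
    exact h.1 rfl

/-- `H` is a minor of `G`. -/
def IsMinor (H : SimpleGraph W) (G : SimpleGraph V) : Prop :=
  ∃ M : W → Set V,
    (∀ w : W, (G.induce (M w)).Connected) ∧
    (Pairwise fun w w' : W => Disjoint (M w) (M w')) ∧
    ∀ w w' : W, H.Adj w w' → ∃ u ∈ M w, ∃ v ∈ M w', G.Adj u v

/-- `M` is a faithful model of the graph `H` (with vertex set `X ⊆ V(G)`) in `G`. -/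
def FaithfulModel (G : SimpleGraph V) (X : Set V) (H : SimpleGraph X)
    (M : X → Set V) : Prop :=
  (∀ w : X, (w : V) ∈ M w) ∧
  (∀ w : X, (G.induce (M w)).Connected) ∧
  (Pairwise fun w w' : X => Disjoint (M w) (M w')) ∧
  ∀ w w' : X, H.Adj w w' → ∃ u ∈ M w, ∃ v ∈ M w', G.Adj u v

/-- `H` (a graph with vertex set `X ⊆ V(G)`) is a faithful minor of `G`. -/
def IsFaithfulMinor (G : SimpleGraph V) (X : Set V) (H : SimpleGraph X) : Prop :=
  ∃ M : X → Set V, FaithfulModel G X H M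

/-- The projection of a separation of `G` to a minor with model `M`. -/
def projSep {X : Set V} (M : X → Set V) (p : Set V × Set V × Set V) :
    Set X × Set X × Set X :=
  ({w : X | M w ⊆ p.1}, {w : X | (M w ∩ p.2.1).Nonempty}, {w : X | M w ⊆ p.2.2})

/-- The graph TH₊₃: vertices 0,1,2,3 are v₁,v₂,v₃,v₄ (pairwise adjacent); 4,5,6 are
w₁,w₂,w₃ with w₁ ~ v₁,v₂,v₃, w₂ ~ v₁,v₂,v₄, w₃ ~ v₁,v₃,v₄. -/
def TH3 : SimpleGraph (Fin 7) :=
  SimpleGraph.fromRel (fun u v =>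
    (u.val < 4 ∧ v.val < 4) ∨
    (u.val = 4 ∧ (v.val = 0 ∨ v.val = 1 ∨ v.val = 2)) ∨
    (u.val = 5 ∧ (v.val = 0 ∨ v.val = 1 ∨ v.val = 3)) ∨
    (u.val = 6 ∧ (v.val = 0 ∨ v.val = 2 ∨ v.val = 3)))

/-- The graph TR₊₃: vertices 0,1,2 are v₁,v₂,v₃ (pairwise adjacent); 3,4,5 are
w₁,w₂,w₃, each adjacent to each of v₁,v₂,v₃. -/
def TR3 : SimpleGraph (Fin 6) :=
  SimpleGraph.fromRel (fun u v =>
    (u.val < 3 ∧ v.val < 3) ∨ (3 ≤ u.val ∧ v.val < 3))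

/-- A graph is exceptional if it embeds (injectively, preserving adjacency)
into TH₊₃ or into TR₊₃. -/
def Exceptional (H : SimpleGraph W) : Prop :=
  (∃ f : W → Fin 7, Function.Injective f ∧ ∀ u v : W, H.Adj u v → TH3.Adj (f u) (f v)) ∨
  (∃ f : W → Fin 6, Function.Injective f ∧ ∀ u v : W, H.Adj u v → TR3.Adj (f u) (f v))

/-- `X` is a `k`-inseparable set of `G`. -/
def KInseparable (G : SimpleGraph V) (k : ℕ) (X : Set V) : Prop :=
  k < X.ncard ∧
    ¬ ∃ Y S Z : Set V, IsSeparation G Y S Z ∧ S.ncard ≤ k ∧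
      (X ∩ Y).Nonempty ∧ (X ∩ Z).Nonempty

/-- A triconnected region: a maximal 2-inseparable set of size ≥ 4. -/
def TriconnectedRegion (G : SimpleGraph V) (R : Set V) : Prop :=
  KInseparable G 2 R ∧ 4 ≤ R.ncard ∧ ∀ R' : Set V, R ⊂ R' → ¬ KInseparable G 2 R'

/-- `H` is a topological subgraph of `G`. -/
def IsTopologicalSubgraph (H : SimpleGraph W) (G : SimpleGraph V) : Prop :=
  ∃ (φ : W → V) (P : ∀ u v : W, H.Adj u v → G.Walk (φ u) (φ v)),
    Function.Injective φ ∧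
    (∀ u v (h : H.Adj u v), (P u v h).IsPath) ∧
    (∀ u v (h : H.Adj u v), P u v h = (P v u h.symm).reverse) ∧
    (∀ u v (h : H.Adj u v), ∀ x ∈ (P u v h).support,
      x ∈ Set.range φ → x = φ u ∨ x = φ v) ∧
    (∀ u v (h : H.Adj u v), ∀ u' v' (h' : H.Adj u' v'), s(u, v) ≠ s(u', v') →
      ∀ x ∈ (P u v h).support, x ∈ (P u' v' h').support →
        (x = φ u ∨ x = φ v) ∧ (x = φ u' ∨ x = φ v'))

/-- A quasi-4-connected region of a 3-connected graph. -/
def Quasi4Region (G : SimpleGraph V) (R : Set V) : Prop :=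
  IsFaithfulMinor G R (torso G R) ∧ Quasi4Connected (torso G R) ∧
    ∀ C : Set V, IsCompOutside G R C → (Nbhd G C).ncard = 3

/-- A split vertex of a separation (Y₀,S₀,Z₀). -/
def SplitVertex (G : SimpleGraph V) (S₀ Z₀ : Set V) (z : V) : Prop :=
  z ∈ Z₀ ∧ ∀ C : Set V, IsCompOutside G (S₀ ∪ {z}) C → (Nbhd G C).ncard = 3

/-- The graph obtained from `G` by contracting the edge `s₁s₂` onto `s₁`. -/
def contractEdge (G : SimpleGraph V) (s₁ s₂ : V) : SimpleGraph ({s₂}ᶜ : Set V) where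
  Adj u v := u ≠ v ∧ (G.Adj (u : V) (v : V) ∨
    ((u : V) = s₁ ∧ G.Adj (v : V) s₂) ∨ ((v : V) = s₁ ∧ G.Adj (u : V) s₂))
  symm := by
    constructor
    rintro u v ⟨hne, h | h | h⟩
    · exact ⟨hne.symm, Or.inl h.symm⟩
    · exact ⟨hne.symm, Or.inr (Or.inr h)⟩
    · exact ⟨hne.symm, Or.inr (Or.inl h)⟩
  loopless := by
    constructor
    intro u h
    exact h.1 rfl

/-- `s t` are the endvertices of a crossedge of two crossing non-degenerate minimal
separations of the tangle `T`, with `s ∈ S₁` and `t ∈ S₂`. -/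
def IsNondegCrossedge (G : SimpleGraph V) (T : Set (Set V × Set V × Set V))
    (s t : V) : Prop :=
  ∃ p q : Set V × Set V × Set V,
    IsMinimalIn T p ∧ IsMinimalIn T q ∧
    ¬ Degenerate G p.1 p.2.1 p.2.2 ∧ ¬ Degenerate G q.1 q.2.1 q.2.2 ∧
    ¬ SepOrthogonal p q ∧ G.Adj s t ∧ p.2.1 ∩ q.1 = {s} ∧ q.2.1 ∩ p.1 = {t}


/-!
The two corners of the crossing separations are compared. The corner towards `Z₁ ∩ Z₂` has
order at least 4: otherwise it lies in the tangle (its other orientation would have the big side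
`Y₁ ∪ Y₂`, violating (T2)), and minimality of both separations forces `Y₁ = Y₂`, which
3-connectivity rules out for distinct separations. As `|S₁| = |S₂| = 3`, the opposite corner
`Y₁ ∩ Y₂` then has order at most 2, so it is empty, and the corners `Y₂ ∩ Z₁` and `Y₁ ∩ Z₂`
show that `S₁ ∩ Y₂` and `S₂ ∩ Y₁` are either both empty (the separations are orthogonal) or
both singletons with `S₁ ∩ S₂ = ∅`. Finally, if `s₁` had no neighbour in `Y₁`, moving it from
`S₁` to `Z₁` would leave a separation of order 2.
-/

open Set

section Separation

variable {G : SimpleGraph V} {Y S Z A₁ S₁ B₁ A₂ S₂ B₂ : Set V}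

theorem isSeparation_iff_forall :
    IsSeparation G Y S Z ↔
      (∀ v, v ∈ Y ∧ v ∉ S ∧ v ∉ Z ∨ v ∉ Y ∧ v ∈ S ∧ v ∉ Z ∨ v ∉ Y ∧ v ∉ S ∧ v ∈ Z) ∧
        ∀ y ∈ Y, ∀ z ∈ Z, ¬ G.Adj y z := by
  simp only [IsSeparation, Set.disjoint_left, Set.eq_univ_iff_forall, Set.mem_union]
  constructor
  · rintro ⟨hYS, hYZ, hSZ, hcov, hadj⟩
    refine ⟨fun v => ?_, hadj⟩
    rcases hcov v with (h | h) | h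
    · exact Or.inl ⟨h, hYS h, hYZ h⟩
    · exact Or.inr (Or.inl ⟨fun h' => hYS h' h, h, hSZ h⟩)
    · exact Or.inr (Or.inr ⟨fun h' => hYZ h' h, fun h' => hSZ h' h, h⟩)
  · rintro ⟨h, hadj⟩
    refine ⟨fun v _ _ => ?_, fun v _ _ => ?_, fun v _ _ => ?_, fun v => ?_, hadj⟩ <;>
      rcases h v with h | h | h <;> simp_all

namespace IsSeparation

theorem symm (h : IsSeparation G Y S Z) : IsSeparation G Z S Y := by
  rw [isSeparation_iff_forall] at h ⊢
  exact ⟨fun v => by rcases h.1 v with h | h | h <;> simp [h],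
    fun z hz y hy hzy => h.2 y hy z hz hzy.symm⟩

theorem union_eq_compl (h : IsSeparation G Y S Z) : S ∪ Z = Yᶜ := by
  rw [isSeparation_iff_forall] at h
  ext v
  rcases h.1 v with h | h | h <;> simp [h]

theorem ncard_eq_inter_add [Finite V] (h : IsSeparation G Y S Z) (X : Set V) :
    X.ncard = (X ∩ Y).ncard + (X ∩ S).ncard + (X ∩ Z).ncard := by
  rw [isSeparation_iff_forall] at h
  have hX : X = X ∩ Y ∪ X ∩ S ∪ X ∩ Z := by
    ext v
    rcases h.1 v with h | h | h <;> simp [h]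
  have hYS : Disjoint (X ∩ Y) (X ∩ S) :=
    Set.disjoint_left.2 fun v hY hS => by rcases h.1 v with h | h | h <;> simp [h] at hY hS
  have hYSZ : Disjoint (X ∩ Y ∪ X ∩ S) (X ∩ Z) :=
    Set.disjoint_left.2 fun v hYS hZ => by rcases h.1 v with h | h | h <;> simp [h] at hYS hZ
  rw [← ncard_union_eq hYS, ← ncard_union_eq hYSZ, ← hX]

theorem corner (h₁ : IsSeparation G A₁ S₁ B₁) (h₂ : IsSeparation G A₂ S₂ B₂) :
    IsSeparation G (A₁ ∩ A₂) (S₁ ∩ A₂ ∪ S₁ ∩ S₂ ∪ S₂ ∩ A₁) (B₁ ∪ B₂) := by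
  rw [isSeparation_iff_forall] at h₁ h₂ ⊢
  refine ⟨fun v => ?_, fun y hy z hz => ?_⟩
  · rcases h₁.1 v with h | h | h <;> rcases h₂.1 v with h' | h' | h' <;> simp [h, h']
  · rcases hz with hz | hz
    exacts [h₁.2 y hy.1 z hz, h₂.2 y hy.2 z hz]

theorem diff_insert {s : V} (h : IsSeparation G Y S Z) (hs : s ∈ S)
    (hY : ∀ y ∈ Y, ¬ G.Adj y s) : IsSeparation G Y (S \ {s}) (insert s Z) := by
  rw [isSeparation_iff_forall] at h ⊢
  refine ⟨fun v => ?_, fun y hy z hz => ?_⟩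
  · by_cases hv : v = s
    · subst hv
      rcases h.1 v with h | h | h <;> simp_all
    · rcases h.1 v with h | h | h <;> simp [h, hv]
  · rcases hz with rfl | hz
    exacts [hY y hy, h.2 y hy z hz]

end IsSeparation

theorem ncard_corner_le (S₁ A₂ S₂ A₁ : Set V) :
    (S₁ ∩ A₂ ∪ S₁ ∩ S₂ ∪ S₂ ∩ A₁).ncard ≤
      (S₁ ∩ A₂).ncard + (S₁ ∩ S₂).ncard + (S₂ ∩ A₁).ncard :=
  (ncard_union_le _ _).trans (Nat.add_le_add_right (ncard_union_le _ _) _)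

theorem sepOrthogonal_of_inter_eq_empty {Y₁ Z₁ Y₂ Z₂ : Set V} (hYY : Y₁ ∩ Y₂ = ∅)
    (h₁₂ : S₁ ∩ Y₂ = ∅) (h₂₁ : S₂ ∩ Y₁ = ∅) :
    SepOrthogonal (Y₁, S₁, Z₁) (Y₂, S₂, Z₂) := by
  rintro v ⟨hv₁, hv₂⟩
  simp only [Set.eq_empty_iff_forall_notMem, mem_inter_iff] at hYY h₁₂ h₂₁
  have := hYY v
  have := h₁₂ v
  have := h₂₁ v
  simp only [mem_union] at hv₁ hv₂
  exact ⟨by tauto, by tauto⟩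

end Separation

namespace KConnected

variable {k : ℕ} {G : SimpleGraph V} {Y₁ S₁ Z₁ Y₂ S₂ Z₂ A₁ B₁ A₂ B₂ : Set V}

theorem le_ncard_corner (hG : KConnected k G) (h₁ : IsSeparation G A₁ S₁ B₁)
    (h₂ : IsSeparation G A₂ S₂ B₂) (hA : (A₁ ∩ A₂).Nonempty) (hB : (B₁ ∪ B₂).Nonempty) :
    k ≤ (S₁ ∩ A₂).ncard + (S₁ ∩ S₂).ncard + (S₂ ∩ A₁).ncard :=
  (hG.2 _ _ _ (h₁.corner h₂) hA hB).trans (ncard_corner_le _ _ _ _)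

theorem fst_ne_of_ne [Finite V] (hG : KConnected k G) (h₁ : IsSeparation G Y₁ S₁ Z₁)
    (h₂ : IsSeparation G Y₂ S₂ Z₂) (hS₁ : S₁.ncard ≤ k) (hS₂ : S₂.ncard ≤ k)
    (hY₁ : Y₁.Nonempty) (hZ₁ : Z₁.Nonempty) (hne : (Y₁, S₁, Z₁) ≠ (Y₂, S₂, Z₂)) :
    Y₁ ≠ Y₂ := by
  rintro rfl
  have hk := hG.le_ncard_corner h₁ h₂ (by rwa [inter_self]) (hZ₁.mono subset_union_left)
  rw [disjoint_iff_inter_eq_empty.1 h₁.1.symm, disjoint_iff_inter_eq_empty.1 h₂.1.symm,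
    ncard_empty] at hk
  have hSS : S₁ ∩ S₂ = S₁ :=
    eq_of_subset_of_ncard_le inter_subset_left (by omega)
  have hS : S₁ = S₂ := eq_of_subset_of_ncard_le (inter_eq_left.1 hSS)
    (by rw [hSS] at hk; omega)
  subst hS
  have hZ : Z₁ = Z₂ := compl_injective (h₁.symm.union_eq_compl ▸ h₂.symm.union_eq_compl)
  exact hne (by rw [hZ])

theorem le_ncard_of_inter_eq_empty (hG : KConnected k G) (h₁ : IsSeparation G Y₁ S₁ Z₁)
    (h₂ : IsSeparation G Y₂ S₂ Z₂) (hY₁ : Y₁.Nonempty) (hY₂ : Y₂.Nonempty)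
    (hYY : Y₁ ∩ Y₂ = ∅) (hSY : S₁ ∩ Y₂ = ∅) :
    k ≤ (S₁ ∩ S₂).ncard + (S₂ ∩ Z₁).ncard := by
  have hY₂Z₁ : Y₂ ⊆ Z₁ := by
    intro y hy
    rcases (isSeparation_iff_forall.1 h₁).1 y with h | h | h
    · exact (eq_empty_iff_forall_notMem.1 hYY y ⟨h.1, hy⟩).elim
    · exact (eq_empty_iff_forall_notMem.1 hSY y ⟨h.2.1, hy⟩).elim
    · exact h.2.2
  simpa [hSY] using hG.le_ncard_corner h₁.symm h₂ (by rwa [inter_eq_right.2 hY₂Z₁])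
    (hY₁.mono subset_union_left)

theorem adj_of_inter_eq_singleton [Finite V] {s₁ s₂ : V} (hG : KConnected k G)
    (h₁ : IsSeparation G Y₁ S₁ Z₁) (h₂ : IsSeparation G Y₂ S₂ Z₂) (hS₁ : S₁.ncard ≤ k)
    (hY₁ : Y₁.Nonempty) (hYY : Y₁ ∩ Y₂ = ∅) (hs₁ : S₁ ∩ Y₂ = {s₁})
    (hs₂ : S₂ ∩ Y₁ = {s₂}) : G.Adj s₁ s₂ := by
  by_contra hns
  have hs₁' : s₁ ∈ S₁ ∩ Y₂ := hs₁ ▸ rfl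
  have hnbr : ∀ y ∈ Y₁, ¬ G.Adj y s₁ := by
    intro y hy hadj
    have hyS₂ : y ∈ S₂ := by
      have h₂' := isSeparation_iff_forall.1 h₂
      rcases h₂'.1 y with h | h | h
      · exact (eq_empty_iff_forall_notMem.1 hYY y ⟨hy, h.1⟩).elim
      · exact h.2.1
      · exact (h₂'.2 s₁ hs₁'.2 y h.2.2 hadj.symm).elim
    have hy : y ∈ S₂ ∩ Y₁ := ⟨hyS₂, hy⟩
    rw [hs₂, mem_singleton_iff] at hy
    exact hns (hy ▸ hadj.symm)
  have hk := hG.2 _ _ _ (h₁.diff_insert hs₁'.1 hnbr) hY₁ (insert_nonempty _ _)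
  have := ncard_sdiff_singleton_add_one hs₁'.1
  omega

end KConnected

namespace IsTangle

variable {k : ℕ} {G : SimpleGraph V} {T : Set (Set V × Set V × Set V)}
  {p q r : Set V × Set V × Set V}

theorem isSeparation (hT : IsTangle G k T) (hp : p ∈ T) : IsSeparation G p.1 p.2.1 p.2.2 :=
  (hT.1 p hp).1

theorem trivial_mem (hT : IsTangle G k T) (hk : 0 < k) :
    ((∅ : Set V), (∅ : Set V), (univ : Set V)) ∈ T := by
  refine (hT.2.1 _ _ _ ?_ (by simpa using hk)).resolve_right fun h => ?_
  · rw [isSeparation_iff_forall]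
    simp
  · simpa using hT.2.2.2 _ h

theorem not_snd_snd_subset (hT : IsTangle G k T) (hp : p ∈ T) (hq : q ∈ T) (hr : r ∈ T) :
    ¬ r.2.2 ⊆ p.1 ∪ q.1 := by
  intro hsub
  have hp' := isSeparation_iff_forall.1 (hT.isSeparation hp)
  have hq' := isSeparation_iff_forall.1 (hT.isSeparation hq)
  -- a vertex of `p.1` and all its neighbours avoid `p.2.2`
  have key : ∀ u v, G.Adj u v → u ∈ r.2.2 → (u ∈ p.2.2 ∨ v ∈ p.2.2) →
      (u ∈ q.2.2 ∨ v ∈ q.2.2) → False := by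
    intro u v huv hu hup huq
    have := hp'.1 u
    have := hq'.1 u
    rcases hsub hu with hu' | hu'
    · exact hup.elim (fun h => by tauto) (hp'.2 u hu' v · huv)
    · exact huq.elim (fun h => by tauto) (hq'.2 u hu' v · huv)
  rcases hT.2.2.1 p hp q hq r hr with ⟨v, ⟨hvp, hvq⟩, hvr⟩ | ⟨u, v, huv, hup, huq, hur⟩
  · have := hp'.1 v
    have := hq'.1 v
    rcases hsub hvr with h | h <;> tauto
  · rcases hur with hu | hv
    · exact key u v huv hu hup huq
    · exact key v u huv.symm hv hup.symm huq.symm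

theorem mem_of_fst_subset {Y S Z : Set V} (hT : IsTangle G k T) (hp : p ∈ T) (hq : q ∈ T)
    (hsep : IsSeparation G Y S Z) (hS : S.ncard < k) (hY : Y ⊆ p.1 ∪ q.1) : (Y, S, Z) ∈ T :=
  (hT.2.1 Y S Z hsep hS).resolve_right fun h => hT.not_snd_snd_subset hp hq h hY

end IsTangle

namespace IsMinimalIn

variable {k : ℕ} {G : SimpleGraph V} {T : Set (Set V × Set V × Set V)}
  {p q : Set V × Set V × Set V}

theorem fst_eq_of_subset (hT : IsTangle G k T) (hp : IsMinimalIn T p) (hq : q ∈ T)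
    (h : p.1 ⊆ q.1) : q.1 = p.1 := by
  have hp' := (hT.isSeparation hp.1).union_eq_compl
  have hq' := (hT.isSeparation hq).union_eq_compl
  by_cases heq : q.2.1 ∪ q.2.2 = p.2.1 ∪ p.2.2
  · rw [hp', hq'] at heq
    exact compl_injective heq
  · have hsub : q.2.1 ∪ q.2.2 ⊆ p.2.1 ∪ p.2.2 := by
      rw [hp', hq']
      exact compl_subset_compl.2 h
    rw [hp.2 q hq (Or.inl (hsub.ssubset_of_ne heq))]

theorem eq_trivial (hT : IsTangle G k T) (hk : 0 < k) (hp : IsMinimalIn T p) (h : p.1 = ∅) :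
    p = (∅, ∅, univ) := by
  refine (hp.2 _ (hT.trivial_mem hk) (Or.inr ⟨?_, empty_subset _⟩)).symm
  rw [(hT.isSeparation hp.1).union_eq_compl, h, compl_empty, empty_union]

theorem fst_nonempty (hT : IsTangle G k T) (hk : 0 < k) (hp : IsMinimalIn T p)
    (hq : IsMinimalIn T q) (hne : p ≠ q) : p.1.Nonempty := by
  rw [nonempty_iff_ne_empty]
  intro h
  have hq₁ : q.1 = ∅ := (hp.fst_eq_of_subset hT hq.1 (h ▸ empty_subset _)).trans h
  exact hne ((hp.eq_trivial hT hk h).trans (hq.eq_trivial hT hk hq₁).symm)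

theorem le_ncard_corner_of_fst_ne {Y₁ S₁ Z₁ Y₂ S₂ Z₂ : Set V} (hT : IsTangle G k T)
    (h₁ : IsMinimalIn T (Y₁, S₁, Z₁)) (h₂ : IsMinimalIn T (Y₂, S₂, Z₂)) (hY : Y₁ ≠ Y₂) :
    k ≤ (S₁ ∩ Z₂).ncard + (S₁ ∩ S₂).ncard + (S₂ ∩ Z₁).ncard := by
  by_contra! hlt
  have hsep := ((hT.isSeparation h₁.1).symm.corner (hT.isSeparation h₂.1).symm).symm
  have hmem := hT.mem_of_fst_subset h₁.1 h₂.1 hsep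
    ((ncard_corner_le _ _ _ _).trans_lt hlt) subset_rfl
  have e₁ := h₁.fst_eq_of_subset hT hmem subset_union_left
  have e₂ := h₂.fst_eq_of_subset hT hmem subset_union_right
  exact hY (e₁.symm.trans e₂)

end IsMinimalIn

theorem statement14 {V : Type*} [Fintype V] (G : SimpleGraph V)
    (h3 : KConnected 3 G) (T : Set (Set V × Set V × Set V)) (hT : IsTangle G 4 T)
    (Y₁ S₁ Z₁ Y₂ S₂ Z₂ : Set V)
    (h₁ : IsMinimalIn T (Y₁, S₁, Z₁)) (h₂ : IsMinimalIn T (Y₂, S₂, Z₂))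
    (hne : (Y₁, S₁, Z₁) ≠ (Y₂, S₂, Z₂)) :
    SepOrthogonal (Y₁, S₁, Z₁) (Y₂, S₂, Z₂) ∨
      (Y₁ ∩ Y₂ = ∅ ∧ S₁ ∩ S₂ = ∅ ∧
        ∃ s₁ s₂ : V, G.Adj s₁ s₂ ∧ S₁ ∩ Y₂ = {s₁} ∧ S₂ ∩ Y₁ = {s₂}) := by
  obtain ⟨hsep₁, hS₁⟩ : IsSeparation G Y₁ S₁ Z₁ ∧ S₁.ncard < 4 := hT.1 _ h₁.1
  obtain ⟨hsep₂, hS₂⟩ : IsSeparation G Y₂ S₂ Z₂ ∧ S₂.ncard < 4 := hT.1 _ h₂.1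
  have hY₁ := h₁.fst_nonempty hT four_pos h₂ hne
  have hY₂ := h₂.fst_nonempty hT four_pos h₁ hne.symm
  have hZ₁ : Z₁.Nonempty := hT.2.2.2 _ h₁.1
  have hS₁3 : S₁.ncard = 3 := by have := h3.2 _ _ _ hsep₁ hY₁ hZ₁; omega
  have hS₂3 : S₂.ncard = 3 := by have := h3.2 _ _ _ hsep₂ hY₂ (hT.2.2.2 _ h₂.1); omega
  have hZZ := h₁.le_ncard_corner_of_fst_ne hT h₂
    (h3.fst_ne_of_ne hsep₁ hsep₂ hS₁3.le hS₂3.le hY₁ hZ₁ hne)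
  have hcount₁ := hsep₂.ncard_eq_inter_add S₁
  have hcount₂ := hsep₁.ncard_eq_inter_add S₂
  rw [inter_comm S₂ S₁] at hcount₂
  have hYY : Y₁ ∩ Y₂ = ∅ := by
    by_contra h
    have := h3.le_ncard_corner hsep₁ hsep₂ (nonempty_iff_ne_empty.2 h) (hZ₁.mono subset_union_left)
    omega
  obtain ha | ha := (S₁ ∩ Y₂).eq_empty_or_nonempty
  · have := h3.le_ncard_of_inter_eq_empty hsep₁ hsep₂ hY₁ hY₂ hYY ha
    exact .inl (sepOrthogonal_of_inter_eq_empty hYY ha ((ncard_eq_zero (toFinite _)).1 (by omega)))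
  obtain ha' | ha' := (S₂ ∩ Y₁).eq_empty_or_nonempty
  · have := inter_comm S₂ S₁ ▸ h3.le_ncard_of_inter_eq_empty hsep₂ hsep₁ hY₂ hY₁
      (inter_comm Y₁ Y₂ ▸ hYY) ha'
    exact .inl (sepOrthogonal_of_inter_eq_empty hYY ((ncard_eq_zero (toFinite _)).1 (by omega)) ha')
  have := (ncard_pos (toFinite _)).2 ha
  have := (ncard_pos (toFinite _)).2 ha'
  obtain ⟨s₁, hs₁⟩ := ncard_eq_one.1 (show (S₁ ∩ Y₂).ncard = 1 by omega)
  obtain ⟨s₂, hs₂⟩ := ncard_eq_one.1 (show (S₂ ∩ Y₁).ncard = 1 by omega)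
  exact .inr ⟨hYY, (ncard_eq_zero (toFinite _)).1 (by omega), s₁, s₂,
    h3.adj_of_inter_eq_singleton hsep₁ hsep₂ hS₁3.le hY₁ hYY hs₁ hs₂, hs₁, hs₂⟩
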